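/- Let σ ∈ (1/2, 1). Then for every ξ ∈ ℝ with ξ ≠ 0, (p₁(ξ) + p₁(−ξ))/2 < |ξ|^{2σ}; that is, the even part of the symbol p₁ is strictly dominated by the symbol |ξ|^{2σ} of (−Δ)^σ away from the origin. -/

import Mathlib

open Real

/-- The symbol `p₁(ξ) = |ξ+1|^{2σ} − 1 − 2σξ`. -/
noncomputable def pOne (σ : ℝ) (ξ : ℝ) : ℝ := |ξ + 1| ^ (2*σ) - 1 - 2*σ*ξ

/-!
With `p = 2σ ∈ (1, 2)` the claim is the scalar inequality
`|a + b|^p + |a - b|^p < 2 (|a|^p + |b|^p)` for `a, b ≠ 0`, taken at `a = 1`, `b = ξ`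
(the linear terms of `p₁` cancel in the even part). By symmetry and homogeneity it suffices
to take `a = 1`, `b = t ∈ (0, 1]`. There `2 (1 + t^p) - (1 + t)^p - (1 - t)^p` vanishes at `0`
and has derivative `p (2 t^β - (1 + t)^β + (1 - t)^β)` with `β = p - 1 ∈ (0, 1)`, which is
positive by subadditivity of `s ↦ s^β` and `2^β < 2`:
`(1 + t)^β ≤ (1 - t)^β + (2t)^β < (1 - t)^β + 2 t^β`.
-/

open Set

lemma one_add_rpow_lt_one_sub_rpow_add_two_mul_rpow {β t : ℝ} (hβ : β ∈ Ioo 0 1)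
    (ht : t ∈ Ioc 0 1) : (1 + t) ^ β < (1 - t) ^ β + 2 * t ^ β :=
  calc (1 + t) ^ β = ((1 - t) + 2 * t) ^ β := by ring_nf
    _ ≤ (1 - t) ^ β + (2 * t) ^ β :=
      rpow_add_le_add_rpow (by linarith [ht.2]) (by linarith [ht.1]) hβ.1.le hβ.2.le
    _ = (1 - t) ^ β + 2 ^ β * t ^ β := by rw [mul_rpow zero_le_two ht.1.le]
    _ < (1 - t) ^ β + 2 * t ^ β := by
      gcongr
      · exact rpow_pos_of_pos ht.1 β
      · simpa using rpow_lt_rpow_of_exponent_lt one_lt_two hβ.2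

lemma one_add_rpow_add_one_sub_rpow_lt {p t : ℝ} (hp : p ∈ Ioo 1 2) (ht : t ∈ Ioc 0 1) :
    (1 + t) ^ p + (1 - t) ^ p < 2 * (1 + t ^ p) := by
  obtain ⟨hp₁, hp₂⟩ := hp
  set g : ℝ → ℝ := fun s ↦ 2 * (1 + s ^ p) - (1 + s) ^ p - (1 - s) ^ p
  have hg_deriv : ∀ s ∈ Ioo (0 : ℝ) 1, HasDerivAt g
      (p * (2 * s ^ (p - 1) - (1 + s) ^ (p - 1) + (1 - s) ^ (p - 1))) s := by
    intro s hs
    have h₁ := ((hasDerivAt_id s).const_add 1).rpow_const (p := p) (Or.inr hp₁.le)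
    have h₂ := ((hasDerivAt_id s).const_sub 1).rpow_const (p := p) (Or.inr hp₁.le)
    have h₃ := (hasDerivAt_id s).rpow_const (p := p) (Or.inr hp₁.le)
    exact (((h₃.const_add 1).const_mul 2).sub h₁ |>.sub h₂).congr_deriv
      (by simp only [id]; ring)
  have hg_cont : Continuous g := by
    have hp₀ : 0 ≤ p := by linarith
    simp only [g]
    fun_prop (disch := exact fun _ ↦ Or.inr hp₀)
  have hg_mono : StrictMonoOn g (Icc 0 1) := by
    refine strictMonoOn_of_deriv_pos (convex_Icc 0 1) hg_cont.continuousOn fun s hs ↦ ?_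
    rw [interior_Icc] at hs
    rw [(hg_deriv s hs).deriv]
    have := one_add_rpow_lt_one_sub_rpow_add_two_mul_rpow (β := p - 1)
      ⟨by linarith, by linarith⟩ ⟨hs.1, hs.2.le⟩
    exact mul_pos (by linarith) (by linarith)
  have hg_pos := hg_mono ⟨le_rfl, zero_le_one⟩ ⟨ht.1.le, ht.2⟩ ht.1
  simp only [g, zero_rpow (by linarith : p ≠ 0)] at hg_pos
  norm_num at hg_pos
  linarith

lemma abs_one_add_rpow_add_abs_one_sub_rpow_lt {p t : ℝ} (hp : p ∈ Ioo 1 2) (ht₀ : t ≠ 0)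
    (ht₁ : |t| ≤ 1) : |1 + t| ^ p + |1 - t| ^ p < 2 * (1 + |t| ^ p) := by
  rcases ht₀.lt_or_gt with hneg | hpos
  · rw [abs_of_neg hneg] at ht₁ ⊢
    have h := one_add_rpow_add_one_sub_rpow_lt hp ⟨neg_pos.2 hneg, ht₁⟩
    rw [abs_of_nonneg (by linarith), abs_of_nonneg (by linarith)]
    rw [sub_neg_eq_add, ← sub_eq_add_neg] at h
    linarith
  · rw [abs_of_pos hpos] at ht₁ ⊢
    rw [abs_of_pos (by linarith), abs_of_nonneg (by linarith)]
    exact one_add_rpow_add_one_sub_rpow_lt hp ⟨hpos, ht₁⟩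

theorem abs_add_rpow_add_abs_sub_rpow_lt {p a b : ℝ} (hp : p ∈ Ioo 1 2) (ha : a ≠ 0)
    (hb : b ≠ 0) : |a + b| ^ p + |a - b| ^ p < 2 * (|a| ^ p + |b| ^ p) := by
  wlog hba : |b| ≤ |a| generalizing a b
  · rw [add_comm a, abs_sub_comm, add_comm (|a| ^ p)]
    exact this hb ha (le_of_not_ge hba)
  set t := b / a
  have hb_eq : b = a * t := (mul_div_cancel₀ b ha).symm
  have habs_mul : ∀ s : ℝ, |a * s| ^ p = |a| ^ p * |s| ^ p := fun s ↦ by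
    rw [abs_mul, mul_rpow (abs_nonneg a) (abs_nonneg s)]
  have ht₁ : |t| ≤ 1 := by
    rwa [abs_div, div_le_one (abs_pos.2 ha)]
  have key := abs_one_add_rpow_add_abs_one_sub_rpow_lt hp (div_ne_zero hb ha) ht₁
  calc |a + b| ^ p + |a - b| ^ p = |a| ^ p * (|1 + t| ^ p + |1 - t| ^ p) := by
        rw [hb_eq, ← mul_one_add, ← mul_one_sub, habs_mul, habs_mul]; ring
    _ < |a| ^ p * (2 * (1 + |t| ^ p)) := by gcongr
    _ = 2 * (|a| ^ p + |b| ^ p) := by rw [hb_eq, habs_mul]; ring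

/-- The even part of `p₁` is strictly dominated by the symbol `|ξ|^{2σ}` of `(−Δ)^σ`
away from the origin. -/
theorem pOne_even_part_lt (σ : ℝ) (hσ : σ ∈ Set.Ioo (1/2 : ℝ) 1) :
    ∀ ξ : ℝ, ξ ≠ 0 → (pOne σ ξ + pOne σ (-ξ)) / 2 < |ξ| ^ (2*σ) := by
  intro ξ hξ
  have h := abs_add_rpow_add_abs_sub_rpow_lt (p := 2 * σ) (a := 1)
    ⟨by linarith [hσ.1], by linarith [hσ.2]⟩ one_ne_zero hξ
  rw [abs_one, one_rpow] at h
  rw [pOne, pOne, add_comm ξ, neg_add_eq_sub]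
  linarith
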